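/- arXiv:2311.14115 — 3 statements merged into one kernel-verified Lean document; each statement's English description precedes it below -/
import Mathlib

section
/- Let S be a finite set, f : S → ℝ with f(x) > 0 for all x, g : S → ℝ, and let p*, π be probability distributions on S with full support. Define Ω_p(x) = f(x)·log p(x) + g(x). If for all x_A, x_B ∈ S, σ(Ω_{p*}(x_A) − Ω_{p*}(x_B)) = σ(Ω_π(x_A) − Ω_π(x_B)), then π(x) = p*(x) for all x ∈ S. -/
noncomputable def sigm (t : ℝ) : ℝ := 1 / (1 + Real.exp (-t))

open Finset

lemma sigm_injective : Function.Injective sigm := by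
  intro a b hab
  have hexp : Real.exp (-a) = Real.exp (-b) := by
    simpa [sigm, add_right_inj] using hab
  simpa using Real.exp_injective hexp

section LogRatio

open Real

variable {S : Type*} [Fintype S] {f p q : S → ℝ} {c : ℝ}

lemma sum_lt_sum_of_mul_log_sub_log_eq_pos [Nonempty S] (hf : ∀ x, 0 < f x)
    (hp : ∀ x, 0 < p x) (hq : ∀ x, 0 < q x) (hc_pos : 0 < c)
    (hc : ∀ x, f x * (log (p x) - log (q x)) = c) :
    ∑ x, q x < ∑ x, p x := by
  refine sum_lt_sum_of_nonempty univ_nonempty fun x _ => ?_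
  have hlog : 0 < log (p x) - log (q x) :=
    pos_of_mul_pos_right ((hc x).symm ▸ hc_pos) (hf x).le
  exact (log_lt_log_iff (hq x) (hp x)).mp (by linarith)

/-- Since `f > 0`, the sign of `c` puts `p / q` on one side of `1` everywhere, which equal
total masses rule out unless `c = 0`. -/
lemma eq_of_mul_log_sub_log_eq_const [Nonempty S] (hf : ∀ x, 0 < f x)
    (hp : ∀ x, 0 < p x) (hq : ∀ x, 0 < q x) (hsum : ∑ x, p x = ∑ x, q x)
    (hc : ∀ x, f x * (log (p x) - log (q x)) = c) :
    p = q := by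
  rcases lt_trichotomy c 0 with hc_neg | rfl | hc_pos
  · have hc' : ∀ x, f x * (log (q x) - log (p x)) = -c := fun x => by
      linear_combination -hc x
    exact absurd hsum (sum_lt_sum_of_mul_log_sub_log_eq_pos hf hq hp (neg_pos.mpr hc_neg) hc').ne
  · funext x
    have hlog : log (p x) - log (q x) = 0 :=
      (mul_eq_zero.mp (hc x)).resolve_left (hf x).ne'
    exact log_injOn_pos (hp x) (hq x) (sub_eq_zero.mp hlog)
  · exact absurd hsum (sum_lt_sum_of_mul_log_sub_log_eq_pos hf hp hq hc_pos hc).ne'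

end LogRatio

theorem stmt_5 {S : Type*} [Fintype S] [Nonempty S]
    (f g : S → ℝ) (hf : ∀ x, 0 < f x)
    (pstar π : S → ℝ)
    (hppos : ∀ x, 0 < pstar x) (hpsum : ∑ x, pstar x = 1)
    (hπpos : ∀ x, 0 < π x) (hπsum : ∑ x, π x = 1)
    (h : ∀ xA xB : S,
      sigm ((f xA * Real.log (pstar xA) + g xA) - (f xB * Real.log (pstar xB) + g xB)) =
      sigm ((f xA * Real.log (π xA) + g xA) - (f xB * Real.log (π xB) + g xB))) :
    ∀ x : S, π x = pstar x := by
  obtain ⟨y⟩ := ‹Nonempty S›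
  have hconst : ∀ x, f x * (Real.log (pstar x) - Real.log (π x)) =
      f y * (Real.log (pstar y) - Real.log (π y)) := fun x => by
    linear_combination sigm_injective (h x y)
  have heq := eq_of_mul_log_sub_log_eq_const hf hppos hπpos (hpsum.trans hπsum.symm) hconst
  exact fun x => (congrFun heq x).symm
end

section
/- Let S be a finite set, ℓ : S → ℕ with ℓ(x) ≥ 1 a 'length' function, and p*, π probability distributions on S with full support. Define the length-normalized preference probability P_p(x_A ≻ x_B) = p(x_A)^{1/ℓ(x_A)} / (p(x_A)^{1/ℓ(x_A)} + p(x_B)^{1/ℓ(x_B)}). If P_{p*}(x_A ≻ x_B) = P_π(x_A ≻ x_B) for all x_A, x_B ∈ S, then π = p*. -/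
theorem stmt_11 {S : Type*} [Fintype S] [Nonempty S]
    (ℓ : S → ℕ) (hℓ : ∀ x, 1 ≤ ℓ x)
    (pstar π : S → ℝ)
    (hppos : ∀ x, 0 < pstar x) (hpsum : ∑ x, pstar x = 1)
    (hπpos : ∀ x, 0 < π x) (hπsum : ∑ x, π x = 1)
    (h : ∀ xA xB : S,
      pstar xA ^ ((ℓ xA : ℝ))⁻¹ / (pstar xA ^ ((ℓ xA : ℝ))⁻¹ + pstar xB ^ ((ℓ xB : ℝ))⁻¹) =
      π xA ^ ((ℓ xA : ℝ))⁻¹ / (π xA ^ ((ℓ xA : ℝ))⁻¹ + π xB ^ ((ℓ xB : ℝ))⁻¹)) :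
    π = pstar := by
  set a : S → ℝ := fun x => pstar x ^ ((ℓ x : ℝ))⁻¹ with ha
  set b : S → ℝ := fun x => π x ^ ((ℓ x : ℝ))⁻¹ with hb
  have hapos : ∀ x, 0 < a x := fun x => Real.rpow_pos_of_pos (hppos x) _
  have hbpos : ∀ x, 0 < b x := fun x => Real.rpow_pos_of_pos (hπpos x) _
  have key : ∀ x y : S, a x * b y = b x * a y := by
    intro x y
    have hx := h x y
    have hd1 : a x + a y ≠ 0 := ne_of_gt (add_pos (hapos x) (hapos y))
    have hd2 : b x + b y ≠ 0 := ne_of_gt (add_pos (hbpos x) (hbpos y))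
    have hx' : a x * (b x + b y) = b x * (a x + a y) :=
      (div_eq_div_iff hd1 hd2).mp hx
    linear_combination hx'
  obtain ⟨x0⟩ := ‹Nonempty S›
  set r : ℝ := b x0 / a x0 with hr
  have hrpos : 0 < r := div_pos (hbpos x0) (hapos x0)
  have hbr : ∀ x, b x = r * a x := by
    intro x
    rw [hr, div_mul_eq_mul_div, eq_div_iff (hapos x0).ne']
    linear_combination - key x x0
  have hπeq : ∀ x, π x = r ^ (ℓ x) * pstar x := by
    intro x
    have hℓx : (ℓ x : ℝ) ≠ 0 := by
      have := hℓ x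
      exact Nat.cast_ne_zero.mpr (by omega)
    have h1 : (b x) ^ (ℓ x : ℝ) = π x := by
      show (π x ^ ((ℓ x : ℝ))⁻¹) ^ (ℓ x : ℝ) = π x
      rw [← Real.rpow_mul (hπpos x).le, inv_mul_cancel₀ hℓx, Real.rpow_one]
    have h2 : (a x) ^ (ℓ x : ℝ) = pstar x := by
      show (pstar x ^ ((ℓ x : ℝ))⁻¹) ^ (ℓ x : ℝ) = pstar x
      rw [← Real.rpow_mul (hppos x).le, inv_mul_cancel₀ hℓx, Real.rpow_one]
    calc π x = (b x) ^ (ℓ x : ℝ) := h1.symm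
      _ = (r * a x) ^ (ℓ x : ℝ) := by rw [hbr x]
      _ = r ^ (ℓ x : ℝ) * (a x) ^ (ℓ x : ℝ) :=
        Real.mul_rpow hrpos.le (hapos x).le
      _ = r ^ (ℓ x) * pstar x := by rw [h2, Real.rpow_natCast]
  have hsum : ∑ x, r ^ (ℓ x) * pstar x = 1 := by
    rw [← hπsum]; exact Finset.sum_congr rfl fun x _ => (hπeq x).symm
  have hr1 : r = 1 := by
    by_contra hne
    rcases lt_or_gt_of_ne hne with hlt | hgt
    · have : ∑ x, r ^ (ℓ x) * pstar x < ∑ x, pstar x := by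
        apply Finset.sum_lt_sum_of_nonempty Finset.univ_nonempty
        intro x _
        have hℓx := hℓ x
        have hrl : r ^ (ℓ x) < 1 := pow_lt_one₀ hrpos.le hlt (by omega)
        nlinarith [hppos x]
      rw [hsum, hpsum] at this; linarith
    · have : ∑ x, pstar x < ∑ x, r ^ (ℓ x) * pstar x := by
        apply Finset.sum_lt_sum_of_nonempty Finset.univ_nonempty
        intro x _
        have hℓx := hℓ x
        have hrl : 1 < r ^ (ℓ x) := one_lt_pow₀ hgt (by omega)
        nlinarith [hppos x]
      rw [hsum, hpsum] at this; linarith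
  funext x
  rw [hπeq x, hr1, one_pow, one_mul]
end

section
/- Let S be a finite set and p* a probability distribution on S with full support. Among all probability distributions π on S with full support, the function π ↦ Σ_{x_A,x_B ∈ S} q(x_A,x_B)·D_KL(Ber(p*(x_A)/(p*(x_A)+p*(x_B))) ‖ Ber(π(x_A)/(π(x_A)+π(x_B)))), with q(x_A,x_B) > 0 everywhere, attains its global minimum value 0 uniquely at π = p*. -/
/-- KL divergence between Bernoulli distributions with parameters `p` and `q`. -/
noncomputable def klBer (p q : ℝ) : ℝ :=
  p * Real.log (p / q) + (1 - p) * Real.log ((1 - p) / (1 - q))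

lemma klBer_self {p : ℝ} (hp0 : 0 < p) (hp1 : p < 1) : klBer p p = 0 := by
  unfold klBer
  rw [div_self hp0.ne', div_self (by linarith : (1:ℝ) - p ≠ 0), Real.log_one]
  ring

lemma klBer_nonneg {p r : ℝ} (hp0 : 0 < p) (hp1 : p < 1) (hr0 : 0 < r) (hr1 : r < 1) :
    0 ≤ klBer p r := by
  have h1 : Real.log (r / p) ≤ r / p - 1 := Real.log_le_sub_one_of_pos (by positivity)
  have h2 : Real.log ((1 - r) / (1 - p)) ≤ (1 - r) / (1 - p) - 1 :=
    Real.log_le_sub_one_of_pos (div_pos (by linarith) (by linarith))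
  have e1 : Real.log (p / r) = - Real.log (r / p) := by
    rw [Real.log_div hp0.ne' hr0.ne', Real.log_div hr0.ne' hp0.ne']; ring
  have e2 : Real.log ((1 - p) / (1 - r)) = - Real.log ((1 - r) / (1 - p)) := by
    rw [Real.log_div (by linarith) (by linarith), Real.log_div (by linarith) (by linarith)]
    ring
  unfold klBer
  rw [e1, e2]
  have hp1' : (0:ℝ) < 1 - p := by linarith
  nlinarith [mul_le_mul_of_nonneg_left h1 hp0.le,
    mul_le_mul_of_nonneg_left h2 hp1'.le,
    mul_div_cancel₀ r hp0.ne', mul_div_cancel₀ (1 - r) (by linarith : (1:ℝ) - p ≠ 0)]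

lemma klBer_pos {p r : ℝ} (hp0 : 0 < p) (hp1 : p < 1) (hr0 : 0 < r) (hr1 : r < 1)
    (hne : p ≠ r) : 0 < klBer p r := by
  have hrp : r / p ≠ 1 := by
    intro h
    exact hne (by field_simp at h; linarith)
  have h1 : Real.log (r / p) < r / p - 1 :=
    Real.log_lt_sub_one_of_pos (by positivity) hrp
  have h2 : Real.log ((1 - r) / (1 - p)) ≤ (1 - r) / (1 - p) - 1 :=
    Real.log_le_sub_one_of_pos (div_pos (by linarith) (by linarith))
  have e1 : Real.log (p / r) = - Real.log (r / p) := by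
    rw [Real.log_div hp0.ne' hr0.ne', Real.log_div hr0.ne' hp0.ne']; ring
  have e2 : Real.log ((1 - p) / (1 - r)) = - Real.log ((1 - r) / (1 - p)) := by
    rw [Real.log_div (by linarith) (by linarith), Real.log_div (by linarith) (by linarith)]
    ring
  unfold klBer
  rw [e1, e2]
  have hp1' : (0:ℝ) < 1 - p := by linarith
  nlinarith [mul_lt_mul_of_pos_left h1 hp0,
    mul_le_mul_of_nonneg_left h2 hp1'.le,
    mul_div_cancel₀ r hp0.ne', mul_div_cancel₀ (1 - r) (by linarith : (1:ℝ) - p ≠ 0)]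

theorem stmt_18 {S : Type*} [Fintype S] [Nonempty S]
    (q : S → S → ℝ) (hq : ∀ xA xB, 0 < q xA xB)
    (pstar : S → ℝ) (hppos : ∀ x, 0 < pstar x) (hpsum : ∑ x, pstar x = 1) :
    ∀ π : S → ℝ, (∀ x, 0 < π x) → (∑ x, π x = 1) →
      0 ≤ (∑ xA, ∑ xB, q xA xB *
            klBer (pstar xA / (pstar xA + pstar xB)) (π xA / (π xA + π xB))) ∧
      ((∑ xA, ∑ xB, q xA xB *
            klBer (pstar xA / (pstar xA + pstar xB)) (π xA / (π xA + π xB))) = 0 ↔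
        π = pstar) := by
  intro π hπpos hπsum
  have ratio_mem : ∀ (f : S → ℝ), (∀ x, 0 < f x) → ∀ a b : S,
      0 < f a / (f a + f b) ∧ f a / (f a + f b) < 1 := by
    intro f hf a b
    have h1 : 0 < f a := hf a
    have h2 : 0 < f b := hf b
    constructor
    · positivity
    · rw [div_lt_one (by linarith)]; linarith
  have term_nonneg : ∀ a b : S, 0 ≤ q a b *
      klBer (pstar a / (pstar a + pstar b)) (π a / (π a + π b)) := by
    intro a b
    obtain ⟨hp0, hp1⟩ := ratio_mem pstar hppos a b
    obtain ⟨hr0, hr1⟩ := ratio_mem π hπpos a b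
    exact mul_nonneg (hq a b).le (klBer_nonneg hp0 hp1 hr0 hr1)
  refine ⟨Finset.sum_nonneg fun a _ => Finset.sum_nonneg fun b _ => term_nonneg a b, ?_, ?_⟩
  · intro hzero
    -- each term is zero
    have hterm : ∀ a b : S, q a b *
        klBer (pstar a / (pstar a + pstar b)) (π a / (π a + π b)) = 0 := by
      have h1 := (Finset.sum_eq_zero_iff_of_nonneg
        (fun a _ => Finset.sum_nonneg fun b _ => term_nonneg a b)).mp hzero
      intro a b
      have h2 := (Finset.sum_eq_zero_iff_of_nonneg
        (fun b _ => term_nonneg a b)).mp (h1 a (Finset.mem_univ a))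
      exact h2 b (Finset.mem_univ b)
    have hratio : ∀ a b : S,
        pstar a / (pstar a + pstar b) = π a / (π a + π b) := by
      intro a b
      by_contra hne
      obtain ⟨hp0, hp1⟩ := ratio_mem pstar hppos a b
      obtain ⟨hr0, hr1⟩ := ratio_mem π hπpos a b
      have := klBer_pos hp0 hp1 hr0 hr1 hne
      have := mul_pos (hq a b) this
      rw [hterm a b] at this
      exact lt_irrefl 0 this
    -- cross multiply: pstar a * π b = π a * pstar b
    have hcross : ∀ a b : S, pstar a * π b = π a * pstar b := by
      intro a b
      have h := hratio a b
      have hd1 : pstar a + pstar b ≠ 0 := by have := hppos a; have := hppos b; linarith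
      have hd2 : π a + π b ≠ 0 := by have := hπpos a; have := hπpos b; linarith
      field_simp at h
      nlinarith [h]
    funext x
    have : π x * (∑ b, pstar b) = pstar x * (∑ b, π b) := by
      rw [Finset.mul_sum, Finset.mul_sum]
      exact Finset.sum_congr rfl fun b _ => by
        have := hcross x b; nlinarith [this]
    rw [hpsum, hπsum, mul_one, mul_one] at this
    exact this
  · intro h
    subst h
    refine Finset.sum_eq_zero fun a _ => Finset.sum_eq_zero fun b _ => ?_
    obtain ⟨hp0, hp1⟩ := ratio_mem π hπpos a b
    rw [klBer_self hp0 hp1, mul_zero]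
end
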